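/- arXiv:1208.6475 — 2 statements merged into one kernel-verified Lean document; each statement's English description precedes it below -/
import Mathlib

section
/- Stability of the modified (cascade) target system used when q = 0 (Section 3.5): Let g : [0,1] → ℝ be continuous and q ∈ ℝ. Every classical C¹ solution (α, β) : [0,1]×[0,∞) → ℝ² of the cascade system α_t(x,t) = −ε₁(x) α_x(x,t) + g(x) β(0,t), β_t(x,t) = ε₂(x) β_x(x,t), with boundary conditions α(0,t) = q β(0,t) and β(1,t) = 0, satisfies: for every λ > 0 there exists c > 0 (depending only on ε₁, ε₂, g, q, λ) with ‖(α,β)(·,t)‖_{L²} ≤ c e^{−λ t} ‖(α,β)(·,0)‖_{L²} for all t ≥ 0; moreover α(x,t) = β(x,t) = 0 for all x ∈ [0,1] and t ≥ t_F := ∫₀¹ (1/ε₁(ξ) + 1/ε₂(ξ)) dξ. -/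
/-!
Along the characteristics `dτ/dy = -1/ε₂(y)` the function `β` is constant, so the boundary
condition `β(1,·) = 0` wipes it out after the travel time `∫₀¹ 1/ε₂`. From then on `α` solves a
pure transport equation with zero inflow `α(0,·) = q β(0,·) = 0`, and it vanishes after the
further travel time `∫₀¹ 1/ε₁`. Before that, the weighted energy `∫ α² + μ ∫ β²` grows at most
exponentially: after integrating by parts, the boundary term `-μ ε₂(0) β(0,t)²` coming from `β`
absorbs the boundary and source terms coming from `α` once `μ` is large. Finite-time extinction
together with bounded growth gives decay at every exponential rate.
-/

open MeasureTheory Set Function intervalIntegral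

theorem ContinuousOn.hasDerivWithinAt_integral_Icc {f : ℝ → ℝ} {a b c x : ℝ}
    (hf : ContinuousOn f (Icc a b)) (hc : c ∈ Icc a b) (hx : x ∈ Icc a b) :
    HasDerivWithinAt (fun y => ∫ ξ in c..y, f ξ) (f x) (Icc a b) x := by
  have hab : a ≤ b := hx.1.trans hx.2
  set F : ℝ → ℝ := fun y => f (projIcc a b hab y)
  have hF : Continuous F :=
    hf.comp_continuous (continuous_subtype_val.comp continuous_projIcc) fun y =>
      (projIcc a b hab y).2
  have hFf : EqOn F f (Icc a b) := fun y hy => by simp [F, projIcc_of_mem hab hy]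
  have hint : EqOn (fun y => ∫ ξ in c..y, f ξ) (fun y => ∫ ξ in c..y, F ξ) (Icc a b) :=
    fun y hy => integral_congr (hFf.symm.mono (uIcc_subset_Icc hc hy))
  rw [← hFf hx]
  exact (hF.integral_hasStrictDerivAt c x).hasDerivAt.hasDerivWithinAt.congr_of_mem hint hx

theorem integral_le_integral_of_subinterval {f : ℝ → ℝ} {a b c d : ℝ} (hca : c ≤ a) (hab : a ≤ b)
    (hbd : b ≤ d) (hf : ContinuousOn f (Icc c d)) (hpos : ∀ x ∈ Icc c d, 0 ≤ f x) :
    ∫ x in a..b, f x ≤ ∫ x in c..d, f x :=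
  integral_mono_interval hca hab hbd
    ((ae_restrict_iff' measurableSet_Ioc).2 (Filter.Eventually.of_forall fun x hx =>
      hpos x (Ioc_subset_Icc_self hx)))
    (hf.intervalIntegrable_of_Icc (hca.trans (hab.trans hbd)))

theorem integral_two_mul_weight_mul_deriv_eq {w f f' : ℝ → ℝ} {a b : ℝ} (hab : a < b)
    (hw : ContDiffOn ℝ 1 w (Icc a b)) (hf : ∀ x ∈ Icc a b, HasDerivWithinAt f (f' x) (Icc a b) x)
    (hf' : ContinuousOn f' (Icc a b)) :
    ∫ x in a..b, 2 * f x * (w x * f' x) =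
      w b * f b ^ 2 - w a * f a ^ 2 - ∫ x in a..b, derivWithin w (Icc a b) x * f x ^ 2 := by
  set w' := derivWithin w (Icc a b)
  have hw' : ContinuousOn w' (Icc a b) := hw.continuousOn_derivWithin (uniqueDiffOn_Icc hab) le_rfl
  have hfc : ContinuousOn f (Icc a b) := fun x hx => (hf x hx).continuousWithinAt
  have hderiv : ∀ x ∈ Icc a b,
      HasDerivWithinAt (fun x => w x * f x ^ 2) (w' x * f x ^ 2 + w x * (2 * f x * f' x))
        (Icc a b) x := by
    intro x hx
    have hsq : HasDerivWithinAt (fun y => f y ^ 2) (2 * f x * f' x) (Icc a b) x := by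
      refine ((hf x hx).fun_pow 2).congr_deriv ?_
      push_cast
      ring
    exact ((hw.differentiableOn one_ne_zero) x hx).hasDerivWithinAt.fun_mul hsq
  have hint : IntervalIntegrable (fun x => w' x * f x ^ 2) volume a b :=
    (hw'.mul (hfc.pow 2)).intervalIntegrable_of_Icc hab.le
  have hint' : IntervalIntegrable (fun x => w' x * f x ^ 2 + w x * (2 * f x * f' x)) volume a b :=
    (hw'.mul (hfc.pow 2)).add (hw.continuousOn.mul ((continuousOn_const.mul hfc).mul hf'))
      |>.intervalIntegrable_of_Icc hab.le
  have hftc : ∫ x in a..b, (w' x * f x ^ 2 + w x * (2 * f x * f' x)) =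
      w b * f b ^ 2 - w a * f a ^ 2 :=
    integral_eq_sub_of_hasDeriv_right_of_le hab.le (hw.continuousOn.mul (hfc.pow 2))
      (fun x hx => (hderiv x (Ioo_subset_Icc_self hx)).mono_of_mem_nhdsWithin
        (Icc_mem_nhdsGT_of_mem (Ioo_subset_Ico_self hx))) hint'
  rw [← hftc, ← integral_sub hint' hint]
  exact integral_congr fun x _ => by ring

theorem abs_integral_mul_sq_le {w f : ℝ → ℝ} {a b K : ℝ} (hab : a ≤ b)
    (hw : ContinuousOn w (Icc a b)) (hf : ContinuousOn f (Icc a b))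
    (hK : ∀ x ∈ Icc a b, |w x| ≤ K) :
    |∫ x in a..b, w x * f x ^ 2| ≤ K * ∫ x in a..b, f x ^ 2 := by
  rw [← intervalIntegral.integral_const_mul]
  refine (abs_integral_le_integral_abs hab).trans (integral_mono_on hab
    ((hw.mul (hf.pow 2)).intervalIntegrable_of_Icc hab).abs
    ((continuousOn_const.mul (hf.pow 2)).intervalIntegrable_of_Icc hab) fun x hx => ?_)
  rw [abs_mul, abs_of_nonneg (sq_nonneg (f x))]
  exact mul_le_mul_of_nonneg_right (hK x hx) (sq_nonneg _)

theorem continuousOn_intervalIntegral_of_continuousOn {F : ℝ → ℝ → ℝ} {a b c d : ℝ}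
    (hab : a ≤ b) (hF : ContinuousOn (uncurry F) (Icc a b ×ˢ Icc c d)) :
    ContinuousOn (fun t => ∫ ξ in a..b, F ξ t) (Icc c d) := by
  rcases lt_or_ge d c with hdc | hcd
  · simp [Icc_eq_empty_of_lt hdc]
  set G : ℝ → ℝ → ℝ := fun t ξ => F (projIcc a b hab ξ) (projIcc c d hcd t)
  have hG : Continuous (uncurry G) :=
    hF.comp_continuous
      (f := fun p : ℝ × ℝ => ((projIcc a b hab p.2 : ℝ), (projIcc c d hcd p.1 : ℝ)))
      (by fun_prop) fun p => ⟨(projIcc a b hab p.2).2, (projIcc c d hcd p.1).2⟩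
  refine (continuous_parametric_intervalIntegral_of_continuous' hG a b).continuousOn.congr
    fun t ht => integral_congr fun ξ hξ => ?_
  rw [uIcc_of_le hab] at hξ
  simp [G, projIcc_of_mem hab hξ, projIcc_of_mem hcd ht]

theorem hasDerivAt_intervalIntegral_of_continuousOn {F F' : ℝ → ℝ → ℝ} {a b c d t₀ : ℝ}
    (hab : a ≤ b) (hF : ContinuousOn (uncurry F) (Icc a b ×ˢ Icc c d))
    (hF' : ContinuousOn (uncurry F') (Icc a b ×ˢ Icc c d))
    (hderiv : ∀ ξ ∈ Icc a b, ∀ t ∈ Ioo c d, HasDerivAt (F ξ) (F' ξ t) t) (ht₀ : t₀ ∈ Ioo c d) :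
    HasDerivAt (fun t => ∫ ξ in a..b, F ξ t) (∫ ξ in a..b, F' ξ t₀) t₀ := by
  obtain ⟨M, hM⟩ := (isCompact_Icc.prod isCompact_Icc).exists_bound_of_continuousOn hF'
  have hslice : ∀ {G : ℝ → ℝ → ℝ}, ContinuousOn (uncurry G) (Icc a b ×ˢ Icc c d) →
      ∀ t ∈ Icc c d, AEStronglyMeasurable (G · t) (volume.restrict (uIoc a b)) := by
    intro G hG t ht
    rw [uIoc_of_le hab]
    exact ((hG.uncurry_right t ht).mono Ioc_subset_Icc_self).aestronglyMeasurable measurableSet_Ioc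
  refine (hasDerivAt_integral_of_dominated_loc_of_deriv_le (F := fun t ξ => F ξ t)
    (F' := fun t ξ => F' ξ t) (bound := fun _ => M)
    (Ioo_mem_nhds ht₀.1 ht₀.2)
    (Filter.mem_of_superset (Ioo_mem_nhds ht₀.1 ht₀.2) fun t ht =>
      hslice hF t (Ioo_subset_Icc_self ht))
    ((hF.uncurry_right t₀ (Ioo_subset_Icc_self ht₀)).intervalIntegrable_of_Icc hab)
    (hslice hF' t₀ (Ioo_subset_Icc_self ht₀)) ?_ intervalIntegrable_const ?_).2
  · refine Filter.Eventually.of_forall fun ξ hξ t ht => hM (ξ, t) ⟨?_, Ioo_subset_Icc_self ht⟩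
    rw [uIoc_of_le hab] at hξ
    exact Ioc_subset_Icc_self hξ
  · refine Filter.Eventually.of_forall fun ξ hξ t ht => hderiv ξ ?_ t ht
    rw [uIoc_of_le hab] at hξ
    exact Ioc_subset_Icc_self hξ

theorem le_mul_exp_of_hasDerivAt_le {E E' : ℝ → ℝ} {K a b : ℝ} (hab : a ≤ b)
    (hc : ContinuousOn E (Icc a b)) (hd : ∀ t ∈ Ioo a b, HasDerivAt E (E' t) t)
    (hb : ∀ t ∈ Ioo a b, E' t ≤ K * E t) : E b ≤ E a * Real.exp (K * (b - a)) := by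
  have hanti : AntitoneOn (fun t => E t * Real.exp (-K * t)) (Icc a b) := by
    refine antitoneOn_of_hasDerivWithinAt_nonpos (convex_Icc a b)
      (hc.mul (by fun_prop)) (f' := fun t => (E' t - K * E t) * Real.exp (-K * t)) ?_ ?_
    · rw [interior_Icc]
      intro t ht
      have hexp : HasDerivAt (fun t => Real.exp (-K * t)) (Real.exp (-K * t) * -K) t := by
        simpa using ((hasDerivAt_id t).const_mul (-K)).exp
      exact (((hd t ht).fun_mul hexp).congr_deriv (by ring)).hasDerivWithinAt
    · rw [interior_Icc]
      intro t ht
      exact mul_nonpos_of_nonpos_of_nonneg (sub_nonpos.2 (hb t ht)) (Real.exp_pos _).le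
  have h := hanti ⟨le_rfl, hab⟩ ⟨hab, le_rfl⟩ hab
  have hexp : Real.exp (K * (b - a)) = Real.exp (-K * a) / Real.exp (-K * b) := by
    rw [← Real.exp_sub]; congr 1; ring
  rw [hexp, ← mul_div_assoc, le_div_iff₀ (Real.exp_pos _)]
  exact h

theorem sqrt_le_mul_exp_neg_of_eventually_zero {N : ℝ → ℝ} {C K T lam t : ℝ} (hC : 0 ≤ C)
    (hK : 0 ≤ K) (hlam : 0 ≤ lam) (hgrowth : t ≤ T → N t ≤ C * Real.exp (K * t) * N 0)
    (hzero : T < t → N t = 0) :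
    √(N t) ≤ √C * Real.exp ((K / 2 + lam) * T) * Real.exp (-lam * t) * √(N 0) := by
  rcases le_or_gt t T with htT | hTt
  · calc √(N t) ≤ √(C * Real.exp (K * t) * N 0) := Real.sqrt_le_sqrt (hgrowth htT)
      _ = √C * Real.exp (K * t / 2) * √(N 0) := by
        rw [Real.sqrt_mul (by positivity), Real.sqrt_mul hC, ← Real.exp_half]
      _ ≤ √C * Real.exp ((K / 2 + lam) * T) * Real.exp (-lam * t) * √(N 0) := by
        rw [mul_assoc √C (Real.exp ((K / 2 + lam) * T)), ← Real.exp_add]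
        gcongr
        nlinarith
  · rw [hzero hTt, Real.sqrt_zero]
    positivity

structure HasPartialDerivsOn (f fx ft : ℝ → ℝ → ℝ) (s u : Set ℝ) : Prop where
  contDiffOn : ContDiffOn ℝ 1 (uncurry f) (s ×ˢ u)
  hasDerivWithinAt_fst : ∀ x ∈ s, ∀ t ∈ u, HasDerivWithinAt (fun y => f y t) (fx x t) s x
  hasDerivWithinAt_snd : ∀ x ∈ s, ∀ t ∈ u, HasDerivWithinAt (fun τ => f x τ) (ft x t) u t

namespace HasPartialDerivsOn

variable {f fx ft : ℝ → ℝ → ℝ} {s u : Set ℝ}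

theorem fderivWithin_apply (hf : HasPartialDerivsOn f fx ft s u) (hs : UniqueDiffOn ℝ s)
    (hu : UniqueDiffOn ℝ u) {p : ℝ × ℝ} (hp : p ∈ s ×ˢ u) (v : ℝ × ℝ) :
    fderivWithin ℝ (uncurry f) (s ×ˢ u) p v = fx p.1 p.2 * v.1 + ft p.1 p.2 * v.2 := by
  obtain ⟨x, t⟩ := p
  obtain ⟨hx, ht⟩ := hp
  have hD := ((hf.contDiffOn.differentiableOn one_ne_zero) (x, t) ⟨hx, ht⟩).hasFDerivWithinAt
  have hx' : HasDerivWithinAt (fun y => f y t) (fderivWithin ℝ (uncurry f) (s ×ˢ u) (x, t) (1, 0))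
      s x :=
    hD.comp_hasDerivWithinAt (f := fun y => (y, t)) x
      ((hasDerivWithinAt_id x s).prodMk (hasDerivWithinAt_const x s t)) fun y hy => ⟨hy, ht⟩
  have ht' : HasDerivWithinAt (fun τ => f x τ) (fderivWithin ℝ (uncurry f) (s ×ˢ u) (x, t) (0, 1))
      u t :=
    hD.comp_hasDerivWithinAt (f := fun τ => (x, τ)) t
      ((hasDerivWithinAt_const t u x).prodMk (hasDerivWithinAt_id t u)) fun τ hτ => ⟨hx, hτ⟩
  have h₁ := (hs x hx).eq_deriv _ hx' (hf.hasDerivWithinAt_fst x hx t ht)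
  have h₂ := (hu t ht).eq_deriv _ ht' (hf.hasDerivWithinAt_snd x hx t ht)
  have hv : v = v.1 • ((1 : ℝ), (0 : ℝ)) + v.2 • ((0 : ℝ), (1 : ℝ)) := by
    ext <;> simp
  rw [hv, map_add, map_smul, map_smul, h₁, h₂]
  simp [mul_comm]

theorem continuousOn_fst (hf : HasPartialDerivsOn f fx ft s u) (hs : UniqueDiffOn ℝ s)
    (hu : UniqueDiffOn ℝ u) : ContinuousOn (uncurry fx) (s ×ˢ u) :=
  ((hf.contDiffOn.continuousOn_fderivWithin (hs.prod hu) le_rfl).clm_apply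
    (continuousOn_const (c := ((1 : ℝ), (0 : ℝ))))).congr fun p hp => by
      simp [hf.fderivWithin_apply hs hu hp]; rfl

theorem continuousOn_snd (hf : HasPartialDerivsOn f fx ft s u) (hs : UniqueDiffOn ℝ s)
    (hu : UniqueDiffOn ℝ u) : ContinuousOn (uncurry ft) (s ×ˢ u) :=
  ((hf.contDiffOn.continuousOn_fderivWithin (hs.prod hu) le_rfl).clm_apply
    (continuousOn_const (c := ((0 : ℝ), (1 : ℝ))))).congr fun p hp => by
      simp [hf.fderivWithin_apply hs hu hp]; rfl

theorem eq_of_characteristic (hf : HasPartialDerivsOn f fx ft s u) (hs : UniqueDiffOn ℝ s)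
    (hu : UniqueDiffOn ℝ u) {a b : ℝ} (hab : a ≤ b) {τ τ' : ℝ → ℝ}
    (hmaps : MapsTo (fun y => (y, τ y)) (Icc a b) (s ×ˢ u))
    (hτ : ∀ y ∈ Icc a b, HasDerivWithinAt τ (τ' y) (Icc a b) y)
    (hchar : ∀ y ∈ Icc a b, fx y (τ y) + ft y (τ y) * τ' y = 0) : f b (τ b) = f a (τ a) := by
  have hG : ∀ y ∈ Icc a b, HasDerivWithinAt (fun y => f y (τ y)) 0 (Icc a b) y := by
    intro y hy
    have hD := ((hf.contDiffOn.differentiableOn one_ne_zero) _ (hmaps hy)).hasFDerivWithinAt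
    have hcomp := hD.comp_hasDerivWithinAt (f := fun y => (y, τ y)) y
      ((hasDerivWithinAt_id y _).prodMk (hτ y hy)) hmaps
    rwa [hf.fderivWithin_apply hs hu (hmaps hy), mul_one, hchar y hy] at hcomp
  exact constant_of_has_deriv_right_zero (fun y hy => (hG y hy).continuousWithinAt)
    (fun y hy => (hG y (Ico_subset_Icc_self hy)).mono_of_mem_nhdsWithin
      (Icc_mem_nhdsGE_of_mem hy)) b ⟨hab, le_rfl⟩

theorem hasDerivAt_integral_sq {a b c t : ℝ}
    (hf : HasPartialDerivsOn f fx ft (Icc a b) (Ici c)) (hab : a < b) (ht : c < t) :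
    HasDerivAt (fun τ => ∫ ξ in a..b, f ξ τ ^ 2) (∫ ξ in a..b, 2 * f ξ t * ft ξ t) t := by
  have hsub : Icc a b ×ˢ Icc c (t + 1) ⊆ Icc a b ×ˢ Ici c :=
    prod_mono subset_rfl Icc_subset_Ici_self
  have hfc := hf.contDiffOn.continuousOn.mono hsub
  refine hasDerivAt_intervalIntegral_of_continuousOn (F := fun ξ t => f ξ t ^ 2)
    (F' := fun ξ t => 2 * f ξ t * ft ξ t) hab.le (hfc.pow 2)
    ((continuousOn_const.mul hfc).mul
      ((hf.continuousOn_snd (uniqueDiffOn_Icc hab) (uniqueDiffOn_Ici c)).mono hsub))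
    (fun ξ hξ τ hτ => ?_) ⟨ht, lt_add_one t⟩
  refine (((hf.hasDerivWithinAt_snd ξ hξ τ hτ.1.le).hasDerivAt
    (Ici_mem_nhds hτ.1)).fun_pow 2).congr_deriv ?_
  push_cast
  ring

end HasPartialDerivsOn

structure IsCascadeSolution (ε₁ ε₂ g : ℝ → ℝ) (q : ℝ) (α β αx βx αt βt : ℝ → ℝ → ℝ) : Prop where
  partials_α : HasPartialDerivsOn α αx αt (Icc 0 1) (Ici 0)
  partials_β : HasPartialDerivsOn β βx βt (Icc 0 1) (Ici 0)
  eq_α : ∀ x ∈ Icc (0:ℝ) 1, ∀ t ∈ Ici (0:ℝ), αt x t = -ε₁ x * αx x t + g x * β 0 t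
  eq_β : ∀ x ∈ Icc (0:ℝ) 1, ∀ t ∈ Ici (0:ℝ), βt x t = ε₂ x * βx x t
  boundary_α : ∀ t ∈ Ici (0:ℝ), α 0 t = q * β 0 t
  boundary_β : ∀ t ∈ Ici (0:ℝ), β 1 t = 0

namespace IsCascadeSolution

variable {ε₁ ε₂ g : ℝ → ℝ} {q : ℝ} {α β αx βx αt βt : ℝ → ℝ → ℝ}

theorem β_eq_zero_of_le (hs : IsCascadeSolution ε₁ ε₂ g q α β αx βx αt βt)
    (hε₂ : ContinuousOn ε₂ (Icc 0 1)) (hε₂pos : ∀ x ∈ Icc (0:ℝ) 1, 0 < ε₂ x) {x t : ℝ}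
    (hx : x ∈ Icc (0:ℝ) 1) (ht : ∫ ξ in (0:ℝ)..1, 1 / ε₂ ξ ≤ t) : β x t = 0 := by
  have hinv : ContinuousOn (fun ξ => 1 / ε₂ ξ) (Icc 0 1) :=
    continuousOn_const.div hε₂ fun ξ hξ => (hε₂pos ξ hξ).ne'
  set τ : ℝ → ℝ := fun y => t - ∫ ξ in x..y, 1 / ε₂ ξ
  have hsub : Icc x 1 ⊆ Icc 0 1 := Icc_subset_Icc_left hx.1
  have hmaps : MapsTo (fun y => (y, τ y)) (Icc x 1) (Icc 0 1 ×ˢ Ici 0) := fun y hy =>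
    ⟨hsub hy, sub_nonneg.2 <| (integral_le_integral_of_subinterval hx.1 hy.1 hy.2 hinv
      fun ξ hξ => (one_div_pos.2 (hε₂pos ξ hξ)).le).trans ht⟩
  have hτ : ∀ y ∈ Icc x 1, HasDerivWithinAt τ (-(1 / ε₂ y)) (Icc x 1) y := fun y hy =>
    ((hinv.mono hsub).hasDerivWithinAt_integral_Icc ⟨le_rfl, hx.2⟩ hy).const_sub t
  have hchar : ∀ y ∈ Icc x 1, βx y (τ y) + βt y (τ y) * -(1 / ε₂ y) = 0 := fun y hy => by
    rw [hs.eq_β y (hsub hy) (τ y) (hmaps hy).2]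
    field_simp [(hε₂pos y (hsub hy)).ne']
    ring
  have h := hs.partials_β.eq_of_characteristic (uniqueDiffOn_Icc zero_lt_one) (uniqueDiffOn_Ici 0)
    hx.2 hmaps hτ hchar
  rw [hs.boundary_β _ (hmaps ⟨hx.2, le_rfl⟩).2] at h
  simpa [τ] using h.symm

theorem α_eq_zero_of_le (hs : IsCascadeSolution ε₁ ε₂ g q α β αx βx αt βt)
    (hε₁ : ContinuousOn ε₁ (Icc 0 1)) (hε₂ : ContinuousOn ε₂ (Icc 0 1))
    (hε₁pos : ∀ x ∈ Icc (0:ℝ) 1, 0 < ε₁ x) (hε₂pos : ∀ x ∈ Icc (0:ℝ) 1, 0 < ε₂ x) {x t : ℝ}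
    (hx : x ∈ Icc (0:ℝ) 1) (ht : (∫ ξ in (0:ℝ)..1, 1 / ε₁ ξ) + ∫ ξ in (0:ℝ)..1, 1 / ε₂ ξ ≤ t) :
    α x t = 0 := by
  have hinv : ContinuousOn (fun ξ => 1 / ε₁ ξ) (Icc 0 1) :=
    continuousOn_const.div hε₁ fun ξ hξ => (hε₁pos ξ hξ).ne'
  set τ : ℝ → ℝ := fun y => t + ∫ ξ in x..y, 1 / ε₁ ξ
  have hsub : Icc 0 x ⊆ Icc 0 1 := Icc_subset_Icc_right hx.2
  have hτ_ge : ∀ y ∈ Icc 0 x, ∫ ξ in (0:ℝ)..1, 1 / ε₂ ξ ≤ τ y := fun y hy => by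
    have := integral_le_integral_of_subinterval hy.1 hy.2 hx.2 hinv
      fun ξ hξ => (one_div_pos.2 (hε₁pos ξ hξ)).le
    rw [integral_symm x y] at this
    linarith
  have hβ : ∀ y ∈ Icc 0 x, β 0 (τ y) = 0 := fun y hy =>
    hs.β_eq_zero_of_le hε₂ hε₂pos ⟨le_rfl, zero_le_one⟩ (hτ_ge y hy)
  have hT₂ : 0 ≤ ∫ ξ in (0:ℝ)..1, 1 / ε₂ ξ :=
    integral_nonneg zero_le_one fun ξ hξ => (one_div_pos.2 (hε₂pos ξ hξ)).le
  have hmaps : MapsTo (fun y => (y, τ y)) (Icc 0 x) (Icc 0 1 ×ˢ Ici 0) := fun y hy =>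
    ⟨hsub hy, hT₂.trans (hτ_ge y hy)⟩
  have hτ : ∀ y ∈ Icc 0 x, HasDerivWithinAt τ (1 / ε₁ y) (Icc 0 x) y := fun y hy =>
    ((hinv.mono hsub).hasDerivWithinAt_integral_Icc ⟨hx.1, le_rfl⟩ hy).const_add t
  have hchar : ∀ y ∈ Icc 0 x, αx y (τ y) + αt y (τ y) * (1 / ε₁ y) = 0 := fun y hy => by
    rw [hs.eq_α y (hsub hy) (τ y) (hmaps hy).2, hβ y hy]
    field_simp [(hε₁pos y (hsub hy)).ne']
    ring
  have h := hs.partials_α.eq_of_characteristic (uniqueDiffOn_Icc zero_lt_one) (uniqueDiffOn_Ici 0)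
    hx.1 hmaps hτ hchar
  rw [hs.boundary_α _ (hmaps ⟨le_rfl, hx.1⟩).2, hβ 0 ⟨le_rfl, hx.1⟩, mul_zero] at h
  simpa [τ] using h

theorem integral_β_mul_βt_le (hs : IsCascadeSolution ε₁ ε₂ g q α β αx βx αt βt)
    (hε₂ : ContDiffOn ℝ 1 ε₂ (Icc 0 1)) {K₂ : ℝ}
    (hK₂ : ∀ x ∈ Icc (0:ℝ) 1, |derivWithin ε₂ (Icc 0 1) x| ≤ K₂) {t : ℝ} (ht : 0 ≤ t) :
    ∫ ξ in (0:ℝ)..1, 2 * β ξ t * βt ξ t ≤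
      -(ε₂ 0 * β 0 t ^ 2) + K₂ * ∫ ξ in (0:ℝ)..1, β ξ t ^ 2 := by
  have hU : UniqueDiffOn ℝ (Icc (0:ℝ) 1) := uniqueDiffOn_Icc zero_lt_one
  have hβ := hs.partials_β.contDiffOn.continuousOn.uncurry_right t ht
  have hβx := (hs.partials_β.continuousOn_fst hU (uniqueDiffOn_Ici 0)).uncurry_right t ht
  have hibp := integral_two_mul_weight_mul_deriv_eq zero_lt_one hε₂
    (fun x hx => hs.partials_β.hasDerivWithinAt_fst x hx t ht) hβx
  have hbound := abs_integral_mul_sq_le zero_le_one (hε₂.continuousOn_derivWithin hU le_rfl) hβ hK₂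
  have hpde : ∫ ξ in (0:ℝ)..1, 2 * β ξ t * βt ξ t =
      ∫ ξ in (0:ℝ)..1, 2 * β ξ t * (ε₂ ξ * βx ξ t) :=
    integral_congr fun ξ hξ => by rw [hs.eq_β ξ (by rwa [uIcc_of_le zero_le_one] at hξ) t ht]
  rw [hpde, hibp, hs.boundary_β t ht]
  linarith [neg_abs_le (∫ ξ in (0:ℝ)..1, derivWithin ε₂ (Icc 0 1) ξ * β ξ t ^ 2)]

theorem integral_α_mul_αt_le (hs : IsCascadeSolution ε₁ ε₂ g q α β αx βx αt βt)
    (hε₁ : ContDiffOn ℝ 1 ε₁ (Icc 0 1)) (hε₁pos : ∀ x ∈ Icc (0:ℝ) 1, 0 < ε₁ x)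
    (hg : ContinuousOn g (Icc 0 1)) {K₁ : ℝ}
    (hK₁ : ∀ x ∈ Icc (0:ℝ) 1, |derivWithin ε₁ (Icc 0 1) x| ≤ K₁) {t : ℝ} (ht : 0 ≤ t) :
    ∫ ξ in (0:ℝ)..1, 2 * α ξ t * αt ξ t ≤
      (ε₁ 0 * q ^ 2 + ∫ ξ in (0:ℝ)..1, g ξ ^ 2) * β 0 t ^ 2 +
        (K₁ + 1) * ∫ ξ in (0:ℝ)..1, α ξ t ^ 2 := by
  have hU : UniqueDiffOn ℝ (Icc (0:ℝ) 1) := uniqueDiffOn_Icc zero_lt_one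
  have ii : ∀ {F : ℝ → ℝ}, ContinuousOn F (Icc 0 1) → IntervalIntegrable F volume 0 1 :=
    fun h => h.intervalIntegrable_of_Icc zero_le_one
  have hα := hs.partials_α.contDiffOn.continuousOn.uncurry_right t ht
  have hαx := (hs.partials_α.continuousOn_fst hU (uniqueDiffOn_Ici 0)).uncurry_right t ht
  have hibp := integral_two_mul_weight_mul_deriv_eq zero_lt_one hε₁
    (fun x hx => hs.partials_α.hasDerivWithinAt_fst x hx t ht) hαx
  have hbound := abs_integral_mul_sq_le zero_le_one (hε₁.continuousOn_derivWithin hU le_rfl) hα hK₁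
  have hpde : ∫ ξ in (0:ℝ)..1, 2 * α ξ t * αt ξ t =
      -(∫ ξ in (0:ℝ)..1, 2 * α ξ t * (ε₁ ξ * αx ξ t)) +
        ∫ ξ in (0:ℝ)..1, 2 * (g ξ * β 0 t) * α ξ t := by
    rw [← intervalIntegral.integral_neg, ← integral_add
      (f := fun ξ => -(2 * α ξ t * (ε₁ ξ * αx ξ t))) (g := fun ξ => 2 * (g ξ * β 0 t) * α ξ t)
      (ii ((continuousOn_const.mul hα).mul (hε₁.continuousOn.mul hαx))).neg
      (ii ((continuousOn_const.mul (hg.mul continuousOn_const)).mul hα))]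
    refine integral_congr fun ξ hξ => ?_
    rw [hs.eq_α ξ (by rwa [uIcc_of_le zero_le_one] at hξ) t ht]
    ring
  have hcross : ∫ ξ in (0:ℝ)..1, 2 * (g ξ * β 0 t) * α ξ t ≤
      (∫ ξ in (0:ℝ)..1, g ξ ^ 2) * β 0 t ^ 2 + ∫ ξ in (0:ℝ)..1, α ξ t ^ 2 := by
    calc ∫ ξ in (0:ℝ)..1, 2 * (g ξ * β 0 t) * α ξ t
        ≤ ∫ ξ in (0:ℝ)..1, (β 0 t ^ 2 * g ξ ^ 2 + α ξ t ^ 2) :=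
          integral_mono_on zero_le_one
            (ii ((continuousOn_const.mul (hg.mul continuousOn_const)).mul hα))
            (ii ((continuousOn_const.mul (hg.pow 2)).add (hα.pow 2)))
            fun ξ _ => by
              linarith [two_mul_le_add_sq (g ξ * β 0 t) (α ξ t), mul_pow (g ξ) (β 0 t) 2]
      _ = (∫ ξ in (0:ℝ)..1, g ξ ^ 2) * β 0 t ^ 2 + ∫ ξ in (0:ℝ)..1, α ξ t ^ 2 := by
        rw [integral_add (f := fun ξ => β 0 t ^ 2 * g ξ ^ 2) (g := fun ξ => α ξ t ^ 2)
            (ii (continuousOn_const.mul (hg.pow 2))) (ii (hα.pow 2)),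
          intervalIntegral.integral_const_mul, mul_comm]
  rw [hpde, hibp, hs.boundary_α t ht]
  nlinarith [le_abs_self (∫ ξ in (0:ℝ)..1, derivWithin ε₁ (Icc 0 1) ξ * α ξ t ^ 2),
    mul_nonneg (hε₁pos 1 ⟨zero_le_one, le_rfl⟩).le (sq_nonneg (α 1 t))]

theorem eq_zero_of_le (hs : IsCascadeSolution ε₁ ε₂ g q α β αx βx αt βt)
    (hε₁ : ContinuousOn ε₁ (Icc 0 1)) (hε₂ : ContinuousOn ε₂ (Icc 0 1))
    (hε₁pos : ∀ x ∈ Icc (0:ℝ) 1, 0 < ε₁ x) (hε₂pos : ∀ x ∈ Icc (0:ℝ) 1, 0 < ε₂ x) {x t : ℝ}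
    (hx : x ∈ Icc (0:ℝ) 1) (ht : ∫ ξ in (0:ℝ)..1, (1 / ε₁ ξ + 1 / ε₂ ξ) ≤ t) :
    α x t = 0 ∧ β x t = 0 := by
  have hinv₁ : ContinuousOn (fun ξ => 1 / ε₁ ξ) (Icc 0 1) :=
    continuousOn_const.div hε₁ fun ξ hξ => (hε₁pos ξ hξ).ne'
  have hinv₂ : ContinuousOn (fun ξ => 1 / ε₂ ξ) (Icc 0 1) :=
    continuousOn_const.div hε₂ fun ξ hξ => (hε₂pos ξ hξ).ne'
  rw [integral_add (hinv₁.intervalIntegrable_of_Icc zero_le_one)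
    (hinv₂.intervalIntegrable_of_Icc zero_le_one)] at ht
  have hT₁ : 0 ≤ ∫ ξ in (0:ℝ)..1, 1 / ε₁ ξ :=
    integral_nonneg zero_le_one fun ξ hξ => (one_div_pos.2 (hε₁pos ξ hξ)).le
  exact ⟨hs.α_eq_zero_of_le hε₁ hε₂ hε₁pos hε₂pos hx ht,
    hs.β_eq_zero_of_le hε₂ hε₂pos hx (le_of_add_le_of_nonneg_right ht hT₁)⟩

theorem weighted_energy_le (hs : IsCascadeSolution ε₁ ε₂ g q α β αx βx αt βt)
    (hε₁ : ContDiffOn ℝ 1 ε₁ (Icc 0 1)) (hε₁pos : ∀ x ∈ Icc (0:ℝ) 1, 0 < ε₁ x)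
    (hε₂ : ContDiffOn ℝ 1 ε₂ (Icc 0 1)) (hg : ContinuousOn g (Icc 0 1)) {K₁ K₂ μ : ℝ}
    (hK₁ : ∀ x ∈ Icc (0:ℝ) 1, |derivWithin ε₁ (Icc 0 1) x| ≤ K₁)
    (hK₂ : ∀ x ∈ Icc (0:ℝ) 1, |derivWithin ε₂ (Icc 0 1) x| ≤ K₂) (hμ : 0 ≤ μ)
    (hμε : ε₁ 0 * q ^ 2 + ∫ ξ in (0:ℝ)..1, g ξ ^ 2 ≤ μ * ε₂ 0) {T : ℝ} (hT : 0 ≤ T) :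
    (∫ ξ in (0:ℝ)..1, α ξ T ^ 2) + μ * ∫ ξ in (0:ℝ)..1, β ξ T ^ 2 ≤
      ((∫ ξ in (0:ℝ)..1, α ξ 0 ^ 2) + μ * ∫ ξ in (0:ℝ)..1, β ξ 0 ^ 2) *
        Real.exp ((K₁ + 1 + K₂) * T) := by
  have hK₁0 : 0 ≤ K₁ := (abs_nonneg _).trans (hK₁ 0 ⟨le_rfl, zero_le_one⟩)
  have hK₂0 : 0 ≤ K₂ := (abs_nonneg _).trans (hK₂ 0 ⟨le_rfl, zero_le_one⟩)
  have hcont : ∀ {f : ℝ → ℝ → ℝ}, ContinuousOn (uncurry f) (Icc 0 1 ×ˢ Ici 0) →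
      ContinuousOn (fun t => ∫ ξ in (0:ℝ)..1, f ξ t ^ 2) (Icc 0 T) := fun {f} hf =>
    continuousOn_intervalIntegral_of_continuousOn (F := fun ξ t => f ξ t ^ 2) zero_le_one
      ((hf.mono (prod_mono subset_rfl Icc_subset_Ici_self)).pow 2)
  have h := le_mul_exp_of_hasDerivAt_le (K := K₁ + 1 + K₂)
    (E := fun t => (∫ ξ in (0:ℝ)..1, α ξ t ^ 2) + μ * ∫ ξ in (0:ℝ)..1, β ξ t ^ 2) hT
    ((hcont hs.partials_α.contDiffOn.continuousOn).add
      (continuousOn_const.mul (hcont hs.partials_β.contDiffOn.continuousOn)))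
    (fun t ht => (hs.partials_α.hasDerivAt_integral_sq zero_lt_one ht.1).add
      ((hs.partials_β.hasDerivAt_integral_sq zero_lt_one ht.1).const_mul μ)) (fun t ht => ?_)
  · simpa using h
  have hα := hs.integral_α_mul_αt_le hε₁ hε₁pos hg hK₁ ht.1.le
  have hβ := hs.integral_β_mul_βt_le hε₂ hK₂ ht.1.le
  have hA : 0 ≤ ∫ ξ in (0:ℝ)..1, α ξ t ^ 2 := integral_nonneg zero_le_one fun _ _ => sq_nonneg _
  have hB : 0 ≤ ∫ ξ in (0:ℝ)..1, β ξ t ^ 2 := integral_nonneg zero_le_one fun _ _ => sq_nonneg _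
  nlinarith [mul_le_mul_of_nonneg_left hβ hμ, mul_le_mul_of_nonneg_right hμε (sq_nonneg (β 0 t)),
    mul_nonneg hK₂0 hA, mul_nonneg (mul_nonneg hK₁0 hμ) hB, mul_nonneg hμ hB]

end IsCascadeSolution

theorem exists_energy_growth_bound {ε₁ ε₂ g : ℝ → ℝ} (q : ℝ) (hε₁ : ContDiffOn ℝ 1 ε₁ (Icc 0 1))
    (hε₂ : ContDiffOn ℝ 1 ε₂ (Icc 0 1)) (hε₁pos : ∀ x ∈ Icc (0:ℝ) 1, 0 < ε₁ x)
    (hε₂pos : ∀ x ∈ Icc (0:ℝ) 1, 0 < ε₂ x) (hg : ContinuousOn g (Icc 0 1)) :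
    ∃ C > (0:ℝ), ∃ K ≥ (0:ℝ), ∀ α β αx βx αt βt : ℝ → ℝ → ℝ,
      IsCascadeSolution ε₁ ε₂ g q α β αx βx αt βt → ∀ t, 0 ≤ t →
        ∫ ξ in (0:ℝ)..1, (α ξ t ^ 2 + β ξ t ^ 2) ≤
          C * Real.exp (K * t) * ∫ ξ in (0:ℝ)..1, (α ξ 0 ^ 2 + β ξ 0 ^ 2) := by
  have hU : UniqueDiffOn ℝ (Icc (0:ℝ) 1) := uniqueDiffOn_Icc zero_lt_one
  obtain ⟨K₁, hK₁⟩ :=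
    isCompact_Icc.exists_bound_of_continuousOn (hε₁.continuousOn_derivWithin hU le_rfl)
  obtain ⟨K₂, hK₂⟩ :=
    isCompact_Icc.exists_bound_of_continuousOn (hε₂.continuousOn_derivWithin hU le_rfl)
  have hK₁0 : 0 ≤ K₁ := (norm_nonneg _).trans (hK₁ 0 ⟨le_rfl, zero_le_one⟩)
  have hK₂0 : 0 ≤ K₂ := (norm_nonneg _).trans (hK₂ 0 ⟨le_rfl, zero_le_one⟩)
  set G := ∫ ξ in (0:ℝ)..1, g ξ ^ 2
  have hε₂0 := hε₂pos 0 ⟨le_rfl, zero_le_one⟩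
  have hnum : 0 ≤ ε₁ 0 * q ^ 2 + G :=
    add_nonneg (mul_nonneg (hε₁pos 0 ⟨le_rfl, zero_le_one⟩).le (sq_nonneg q))
      (integral_nonneg zero_le_one fun _ _ => sq_nonneg _)
  -- `μ ε₂(0) ≥ ε₁(0) q² + ∫ g²` lets the boundary term of `β` absorb those of `α`, and `μ ≥ 1`
  -- compares the weighted energy with the plain one.
  set μ := (ε₁ 0 * q ^ 2 + G) / ε₂ 0 + 1
  have hμ1 : 1 ≤ μ := le_add_of_nonneg_left (div_nonneg hnum hε₂0.le)
  have hμε : ε₁ 0 * q ^ 2 + G ≤ μ * ε₂ 0 := by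
    rw [add_mul, div_mul_cancel₀ _ hε₂0.ne']
    linarith
  refine ⟨μ, by linarith, K₁ + 1 + K₂, by linarith, fun α β αx βx αt βt hs t ht => ?_⟩
  have hl := hs.weighted_energy_le hε₁ hε₁pos hε₂ hg (fun x hx => Real.norm_eq_abs _ ▸ hK₁ x hx)
    (fun x hx => Real.norm_eq_abs _ ▸ hK₂ x hx) (by linarith) hμε ht
  have hsplit : ∀ τ, 0 ≤ τ → ∫ ξ in (0:ℝ)..1, (α ξ τ ^ 2 + β ξ τ ^ 2) =
      (∫ ξ in (0:ℝ)..1, α ξ τ ^ 2) + ∫ ξ in (0:ℝ)..1, β ξ τ ^ 2 := fun τ hτ =>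
    integral_add
      ((hs.partials_α.contDiffOn.continuousOn.uncurry_right τ hτ).pow 2
        |>.intervalIntegrable_of_Icc zero_le_one)
      ((hs.partials_β.contDiffOn.continuousOn.uncurry_right τ hτ).pow 2
        |>.intervalIntegrable_of_Icc zero_le_one)
  have hA0 : 0 ≤ ∫ ξ in (0:ℝ)..1, α ξ 0 ^ 2 := integral_nonneg zero_le_one fun _ _ => sq_nonneg _
  have hBt : 0 ≤ ∫ ξ in (0:ℝ)..1, β ξ t ^ 2 := integral_nonneg zero_le_one fun _ _ => sq_nonneg _
  rw [hsplit t ht, hsplit 0 le_rfl]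
  calc (∫ ξ in (0:ℝ)..1, α ξ t ^ 2) + ∫ ξ in (0:ℝ)..1, β ξ t ^ 2
      ≤ (∫ ξ in (0:ℝ)..1, α ξ t ^ 2) + μ * ∫ ξ in (0:ℝ)..1, β ξ t ^ 2 := by nlinarith
    _ ≤ ((∫ ξ in (0:ℝ)..1, α ξ 0 ^ 2) + μ * ∫ ξ in (0:ℝ)..1, β ξ 0 ^ 2) *
          Real.exp ((K₁ + 1 + K₂) * t) := hl
    _ ≤ μ * ((∫ ξ in (0:ℝ)..1, α ξ 0 ^ 2) + ∫ ξ in (0:ℝ)..1, β ξ 0 ^ 2) *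
          Real.exp ((K₁ + 1 + K₂) * t) :=
      mul_le_mul_of_nonneg_right (by nlinarith) (Real.exp_pos _).le
    _ = μ * Real.exp ((K₁ + 1 + K₂) * t) *
          ((∫ ξ in (0:ℝ)..1, α ξ 0 ^ 2) + ∫ ξ in (0:ℝ)..1, β ξ 0 ^ 2) := by ring

/-- Stability of the modified (cascade) target system used when q = 0
(Section 3.5): exponential L² decay with constant depending only on the
data, and finite-time extinction. -/
theorem cascade_target_system_stability
    (ε₁ ε₂ : ℝ → ℝ) (g : ℝ → ℝ) (q : ℝ)
    (hε₁ : ContDiffOn ℝ 1 ε₁ (Icc 0 1)) (hε₂ : ContDiffOn ℝ 1 ε₂ (Icc 0 1))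
    (hε₁pos : ∀ x ∈ Icc (0:ℝ) 1, 0 < ε₁ x) (hε₂pos : ∀ x ∈ Icc (0:ℝ) 1, 0 < ε₂ x)
    (hg : ContinuousOn g (Icc 0 1)) :
    ∀ lam > (0:ℝ), ∃ c > (0:ℝ),
      ∀ (α β αx βx αt βt : ℝ → ℝ → ℝ),
        ContDiffOn ℝ 1 (Function.uncurry α) (Icc 0 1 ×ˢ Ici 0) →
        ContDiffOn ℝ 1 (Function.uncurry β) (Icc 0 1 ×ˢ Ici 0) →
        (∀ x ∈ Icc (0:ℝ) 1, ∀ t ∈ Ici (0:ℝ),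
          HasDerivWithinAt (fun s => α s t) (αx x t) (Icc 0 1) x ∧
          HasDerivWithinAt (fun s => β s t) (βx x t) (Icc 0 1) x ∧
          HasDerivWithinAt (fun τ => α x τ) (αt x t) (Ici 0) t ∧
          HasDerivWithinAt (fun τ => β x τ) (βt x t) (Ici 0) t) →
        -- the cascade system α_t = -ε₁ α_x + g(x) β(0,t), β_t = ε₂ β_x
        (∀ x ∈ Icc (0:ℝ) 1, ∀ t ∈ Ici (0:ℝ),
          αt x t = -ε₁ x * αx x t + g x * β 0 t ∧ βt x t = ε₂ x * βx x t) →
        -- boundary conditions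
        (∀ t ∈ Ici (0:ℝ), α 0 t = q * β 0 t ∧ β 1 t = 0) →
        (∀ t ∈ Ici (0:ℝ),
          Real.sqrt (∫ ξ in (0:ℝ)..1, ((α ξ t) ^ 2 + (β ξ t) ^ 2)) ≤
            c * Real.exp (-lam * t) *
              Real.sqrt (∫ ξ in (0:ℝ)..1, ((α ξ 0) ^ 2 + (β ξ 0) ^ 2))) ∧
        (∀ x ∈ Icc (0:ℝ) 1, ∀ t : ℝ,
          (∫ ξ in (0:ℝ)..1, (1 / ε₁ ξ + 1 / ε₂ ξ)) ≤ t →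
          α x t = 0 ∧ β x t = 0) := by
  obtain ⟨C, hC, K, hK, hgrowth⟩ := exists_energy_growth_bound q hε₁ hε₂ hε₁pos hε₂pos hg
  intro lam hlam
  set tF := ∫ ξ in (0:ℝ)..1, (1 / ε₁ ξ + 1 / ε₂ ξ)
  refine ⟨√C * Real.exp ((K / 2 + lam) * tF), by positivity,
    fun α β αx βx αt βt hα hβ hder hpde hbc => ?_⟩
  have hs : IsCascadeSolution ε₁ ε₂ g q α β αx βx αt βt :=
    ⟨⟨hα, fun x hx t ht => (hder x hx t ht).1, fun x hx t ht => (hder x hx t ht).2.2.1⟩,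
      ⟨hβ, fun x hx t ht => (hder x hx t ht).2.1, fun x hx t ht => (hder x hx t ht).2.2.2⟩,
      fun x hx t ht => (hpde x hx t ht).1, fun x hx t ht => (hpde x hx t ht).2,
      fun t ht => (hbc t ht).1, fun t ht => (hbc t ht).2⟩
  have hext : ∀ x ∈ Icc (0:ℝ) 1, ∀ t, tF ≤ t → α x t = 0 ∧ β x t = 0 := fun x hx t ht =>
    hs.eq_zero_of_le hε₁.continuousOn hε₂.continuousOn hε₁pos hε₂pos hx ht
  refine ⟨fun t ht => sqrt_le_mul_exp_neg_of_eventually_zero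
    (N := fun t => ∫ ξ in (0:ℝ)..1, (α ξ t ^ 2 + β ξ t ^ 2)) hC.le hK hlam.le
    (fun _ => hgrowth α β αx βx αt βt hs t ht) fun htF => ?_, hext⟩
  refine (integral_congr fun ξ hξ => ?_).trans integral_zero
  rw [uIcc_of_le zero_le_one] at hξ
  simp [hext ξ hξ t htF.le]
end

section
/- Integral estimate along the second characteristic (Lemma A.3, case i = 2): For every integer n ≥ 1 and every (x,ξ) ∈ T, setting z := φ₃⁻¹(φ₁(x) + φ₂(ξ)) and s₂^F := φ₁(x) − φ₁(z), one has ∫₀^{s₂^F} [ φ₁⁻¹( φ₁(z) + s ) ]ⁿ ds ≤ K_ε x^{n+1}/(n+1), where K_ε := max_{x∈[0,1]} max{ 1/ε₁(x), 1/ε₂(x) }. -/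
/-! After the substitution `t = φ₁(u)` the integral becomes `∫_z^x uⁿ/ε₁(u) du`, where `z ≤ x`
because `φ₃(z) = φ₁(x) + φ₂(ξ) ≤ φ₃(x)`; bounding `1/ε₁` by `K_ε` and `∫_z^x uⁿ` by `∫_0^x uⁿ`
gives the estimate. -/

open MeasureTheory Set

/-- `φ(ε)(x) = ∫₀ˣ dz/ε(z)`. -/
noncomputable def phiInt (ε : ℝ → ℝ) (x : ℝ) : ℝ := ∫ z in (0:ℝ)..x, 1 / ε z

theorem le_ciSup_of_continuousOn {α β : Type*} [TopologicalSpace α]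
    [ConditionallyCompleteLinearOrder β] [TopologicalSpace β] [OrderTopology β]
    {f : α → β} {s : Set α} (hs : IsCompact s) (hf : ContinuousOn f s) {y : α} (hy : y ∈ s) :
    f y ≤ ⨆ y : s, f y :=
  le_ciSup (f := fun y : s => f y) (by simpa only [image_eq_range] using hs.bddAbove_image hf)
    ⟨y, hy⟩

theorem ContinuousOn.one_div_of_pos {f : ℝ → ℝ} {s : Set ℝ} (hf : ContinuousOn f s)
    (hpos : ∀ x ∈ s, 0 < f x) : ContinuousOn (fun x => 1 / f x) s :=
  continuousOn_const.div hf fun x hx => (hpos x hx).ne'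

@[simp]
theorem phiInt_zero (ε : ℝ → ℝ) : phiInt ε 0 = 0 := by
  simp [phiInt]

section

variable {ε : ℝ → ℝ} (hε : ContinuousOn ε (Icc 0 1)) (hpos : ∀ x ∈ Icc (0:ℝ) 1, 0 < ε x)
include hε hpos

theorem continuousOn_phiInt : ContinuousOn (phiInt ε) (Icc 0 1) := by
  have h := intervalIntegral.continuousOn_primitive_interval (μ := volume) (a := 0) (b := 1)
    (by simpa only [uIcc_of_le zero_le_one] using (hε.one_div_of_pos hpos).integrableOn_Icc)
  rw [uIcc_of_le zero_le_one] at h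
  exact h

theorem hasDerivAt_phiInt {u : ℝ} (hu : u ∈ Ioo (0:ℝ) 1) :
    HasDerivAt (phiInt ε) (1 / ε u) u := by
  have hcont := hε.one_div_of_pos hpos
  exact intervalIntegral.integral_hasDerivAt_right
    ((hcont.mono (Icc_subset_Icc le_rfl hu.2.le)).intervalIntegrable_of_Icc hu.1.le)
    ⟨Ioo 0 1, Ioo_mem_nhds hu.1 hu.2,
      (hcont.mono Ioo_subset_Icc_self).aestronglyMeasurable measurableSet_Ioo⟩
    (hcont.continuousAt (Icc_mem_nhds hu.1 hu.2))

theorem strictMonoOn_phiInt : StrictMonoOn (phiInt ε) (Icc 0 1) := by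
  refine strictMonoOn_of_deriv_pos (convex_Icc 0 1) (continuousOn_phiInt hε hpos) fun u hu => ?_
  rw [interior_Icc] at hu
  rw [(hasDerivAt_phiInt hε hpos hu).deriv]
  exact one_div_pos.2 (hpos u (Ioo_subset_Icc_self hu))

theorem phiInt_mem_Icc {x : ℝ} (hx : x ∈ Icc (0:ℝ) 1) : phiInt ε x ∈ Icc 0 (phiInt ε 1) := by
  have hmono := (strictMonoOn_phiInt hε hpos).monotoneOn
  have h0 := hmono (left_mem_Icc.2 zero_le_one) hx hx.1
  rw [phiInt_zero] at h0
  exact ⟨h0, hmono hx (right_mem_Icc.2 zero_le_one) hx.2⟩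

theorem integral_comp_phiInt {z x : ℝ} (hz : 0 ≤ z) (hzx : z ≤ x) (hx : x ≤ 1) (g : ℝ → ℝ) :
    ∫ t in phiInt ε z..phiInt ε x, g t = ∫ u in z..x, g (phiInt ε u) / ε u := by
  have hsub : Icc z x ⊆ Icc 0 1 := Icc_subset_Icc hz hx
  rw [intervalIntegral.integral_of_le ((strictMonoOn_phiInt hε hpos).monotoneOn
      (hsub (left_mem_Icc.2 hzx)) (hsub (right_mem_Icc.2 hzx)) hzx),
    intervalIntegral.integral_of_le hzx, ← integral_Icc_eq_integral_Ioc,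
    ← integral_Icc_eq_integral_Ioc,
    ← integral_Icc_deriv_smul_of_deriv_nonneg ((continuousOn_phiInt hε hpos).mono hsub)
      (fun u hu => hasDerivAt_phiInt hε hpos (Ioo_subset_Ioo hz hx hu))
      (fun u hu => (one_div_pos.2 (hpos u (hsub (Ioo_subset_Icc_self hu)))).le) hzx]
  simp only [smul_eq_mul, one_div_mul_eq_div]

theorem integral_pow_div_le {K : ℝ} (hK : ∀ y ∈ Icc (0:ℝ) 1, 1 / ε y ≤ K)
    {z x : ℝ} (hz : 0 ≤ z) (hzx : z ≤ x) (hx : x ≤ 1) (n : ℕ) :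
    ∫ u in z..x, u ^ n / ε u ≤ K * x ^ (n + 1) / (n + 1) := by
  have hsub : Icc z x ⊆ Icc 0 1 := Icc_subset_Icc hz hx
  have hK0 : 0 ≤ K := (one_div_pos.2 (hpos 0 (left_mem_Icc.2 zero_le_one))).le.trans
    (hK 0 (left_mem_Icc.2 zero_le_one))
  calc ∫ u in z..x, u ^ n / ε u
      ≤ ∫ u in z..x, K * u ^ n := by
        refine intervalIntegral.integral_mono_on hzx
          (((continuous_pow n).continuousOn.div (hε.mono hsub) fun u hu =>
            (hpos u (hsub hu)).ne').intervalIntegrable_of_Icc hzx)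
          ((continuous_const.mul (continuous_pow n)).intervalIntegrable _ _) fun u hu => ?_
        rw [div_eq_mul_one_div, mul_comm]
        exact mul_le_mul_of_nonneg_right (hK u (hsub hu)) (pow_nonneg (hz.trans hu.1) n)
    _ = K * (x ^ (n + 1) - z ^ (n + 1)) / (n + 1) := by
        rw [intervalIntegral.integral_const_mul, integral_pow, mul_div_assoc]
    _ ≤ K * x ^ (n + 1) / (n + 1) := by
        gcongr
        exact sub_le_self _ (pow_nonneg hz _)

end

section

variable {ε₁ ε₂ : ℝ → ℝ}
  (hε₁ : ContinuousOn ε₁ (Icc 0 1)) (hε₂ : ContinuousOn ε₂ (Icc 0 1))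
  (hε₁pos : ∀ x ∈ Icc (0:ℝ) 1, 0 < ε₁ x) (hε₂pos : ∀ x ∈ Icc (0:ℝ) 1, 0 < ε₂ x)
include hε₁ hε₂ hε₁pos hε₂pos

theorem phiInt_add_phiInt_mem_Icc {x ξ : ℝ} (hx : x ∈ Icc (0:ℝ) 1) (hξ : ξ ∈ Icc (0:ℝ) 1) :
    phiInt ε₁ x + phiInt ε₂ ξ ∈ Icc 0 (phiInt ε₁ 1 + phiInt ε₂ 1) := by
  have h₁ := phiInt_mem_Icc hε₁ hε₁pos hx
  have h₂ := phiInt_mem_Icc hε₂ hε₂pos hξ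
  exact ⟨add_nonneg h₁.1 h₂.1, add_le_add h₁.2 h₂.2⟩

theorem le_of_phiInt_add_phiInt_eq {z x ξ : ℝ} (hz : z ∈ Icc (0:ℝ) 1) (hx : x ∈ Icc (0:ℝ) 1)
    (hξ : ξ ∈ Icc (0:ℝ) 1) (hξx : ξ ≤ x)
    (h : phiInt ε₁ z + phiInt ε₂ z = phiInt ε₁ x + phiInt ε₂ ξ) : z ≤ x := by
  have hmono := (strictMonoOn_phiInt hε₁ hε₁pos).add_monotone
    (strictMonoOn_phiInt hε₂ hε₂pos).monotoneOn
  refine (hmono.le_iff_le hz hx).1 ?_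
  simp only [h]
  gcongr
  exact (strictMonoOn_phiInt hε₂ hε₂pos).monotoneOn hξ hx hξx

end

theorem characteristic_integral_estimate_case2_general
    (ε₁ ε₂ : ℝ → ℝ)
    (hε₁ : ContinuousOn ε₁ (Icc 0 1)) (hε₂ : ContinuousOn ε₂ (Icc 0 1))
    (hε₁pos : ∀ x ∈ Icc (0:ℝ) 1, 0 < ε₁ x) (hε₂pos : ∀ x ∈ Icc (0:ℝ) 1, 0 < ε₂ x)
    (ψ₁ ψ₃ : ℝ → ℝ)
    (hψ₁ : ∀ x ∈ Icc (0:ℝ) 1, ψ₁ (phiInt ε₁ x) = x)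
    (hψ₃' : ∀ s ∈ Icc (0:ℝ) (phiInt ε₁ 1 + phiInt ε₂ 1),
      ψ₃ s ∈ Icc (0:ℝ) 1 ∧ phiInt ε₁ (ψ₃ s) + phiInt ε₂ (ψ₃ s) = s) :
    ∀ n : ℕ, 1 ≤ n → ∀ x ξ : ℝ, 0 ≤ ξ → ξ ≤ x → x ≤ 1 →
      (∫ s in (0:ℝ)..(phiInt ε₁ x - phiInt ε₁ (ψ₃ (phiInt ε₁ x + phiInt ε₂ ξ))),
          (ψ₁ (phiInt ε₁ (ψ₃ (phiInt ε₁ x + phiInt ε₂ ξ)) + s)) ^ n) ≤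
        (⨆ y : Icc (0:ℝ) 1, max (1 / ε₁ y) (1 / ε₂ y)) * x ^ (n + 1) / (n + 1) := by
  intro n _ x ξ hξ hξx hx1
  have hx : x ∈ Icc (0:ℝ) 1 := ⟨hξ.trans hξx, hx1⟩
  have hξ' : ξ ∈ Icc (0:ℝ) 1 := ⟨hξ, hξx.trans hx1⟩
  have hK : ∀ y ∈ Icc (0:ℝ) 1, 1 / ε₁ y ≤ ⨆ y : Icc (0:ℝ) 1, max (1 / ε₁ y) (1 / ε₂ y) :=
    fun y hy => (le_max_left _ _).trans <| le_ciSup_of_continuousOn (f := fun y =>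
      max (1 / ε₁ y) (1 / ε₂ y)) isCompact_Icc ((hε₁.one_div_of_pos hε₁pos).sup
        (hε₂.one_div_of_pos hε₂pos)) hy
  obtain ⟨hz, hφ₃z⟩ := hψ₃' _ (phiInt_add_phiInt_mem_Icc hε₁ hε₂ hε₁pos hε₂pos hx hξ')
  set z := ψ₃ (phiInt ε₁ x + phiInt ε₂ ξ)
  have hzx : z ≤ x := le_of_phiInt_add_phiInt_eq hε₁ hε₂ hε₁pos hε₂pos hz hx hξ' hξx hφ₃z
  calc (∫ s in (0:ℝ)..(phiInt ε₁ x - phiInt ε₁ z), ψ₁ (phiInt ε₁ z + s) ^ n)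
      = ∫ t in phiInt ε₁ z..phiInt ε₁ x, ψ₁ t ^ n := by
        rw [intervalIntegral.integral_comp_add_left (fun t => ψ₁ t ^ n), add_zero,
          add_sub_cancel]
    _ = ∫ u in z..x, u ^ n / ε₁ u := by
        rw [integral_comp_phiInt hε₁ hε₁pos hz.1 hzx hx1]
        refine intervalIntegral.integral_congr fun u hu => ?_
        rw [uIcc_of_le hzx] at hu
        rw [hψ₁ u ⟨hz.1.trans hu.1, hu.2.trans hx1⟩]
    _ ≤ _ := integral_pow_div_le hε₁ hε₁pos hK hz.1 hzx hx1 n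

/-- Integral estimate along the second characteristic (Lemma A.3, case i = 2):
with `z = φ₃⁻¹(φ₁(x) + φ₂(ξ))` and `s₂^F = φ₁(x) − φ₁(z)`,
`∫₀^{s₂^F} [φ₁⁻¹(φ₁(z) + s)]ⁿ ds ≤ K_ε xⁿ⁺¹/(n+1)` where
`K_ε = max_{[0,1]} max(1/ε₁, 1/ε₂)`.  `ψ₁, ψ₂, ψ₃` are the inverses of
`φ₁, φ₂, φ₃ = φ₁ + φ₂`. -/
theorem characteristic_integral_estimate_case2
    (ε₁ ε₂ : ℝ → ℝ)
    (hε₁ : ContinuousOn ε₁ (Icc 0 1)) (hε₂ : ContinuousOn ε₂ (Icc 0 1))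
    (hε₁pos : ∀ x ∈ Icc (0:ℝ) 1, 0 < ε₁ x) (hε₂pos : ∀ x ∈ Icc (0:ℝ) 1, 0 < ε₂ x)
    (ψ₁ ψ₂ ψ₃ : ℝ → ℝ)
    (hψ₁ : ∀ x ∈ Icc (0:ℝ) 1, ψ₁ (phiInt ε₁ x) = x)
    (hψ₁' : ∀ s ∈ Icc (0:ℝ) (phiInt ε₁ 1), ψ₁ s ∈ Icc (0:ℝ) 1 ∧ phiInt ε₁ (ψ₁ s) = s)
    (hψ₂ : ∀ x ∈ Icc (0:ℝ) 1, ψ₂ (phiInt ε₂ x) = x)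
    (hψ₂' : ∀ s ∈ Icc (0:ℝ) (phiInt ε₂ 1), ψ₂ s ∈ Icc (0:ℝ) 1 ∧ phiInt ε₂ (ψ₂ s) = s)
    (hψ₃ : ∀ x ∈ Icc (0:ℝ) 1, ψ₃ (phiInt ε₁ x + phiInt ε₂ x) = x)
    (hψ₃' : ∀ s ∈ Icc (0:ℝ) (phiInt ε₁ 1 + phiInt ε₂ 1),
      ψ₃ s ∈ Icc (0:ℝ) 1 ∧ phiInt ε₁ (ψ₃ s) + phiInt ε₂ (ψ₃ s) = s) :
    ∀ n : ℕ, 1 ≤ n → ∀ x ξ : ℝ, 0 ≤ ξ → ξ ≤ x → x ≤ 1 →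
      (∫ s in (0:ℝ)..(phiInt ε₁ x - phiInt ε₁ (ψ₃ (phiInt ε₁ x + phiInt ε₂ ξ))),
          (ψ₁ (phiInt ε₁ (ψ₃ (phiInt ε₁ x + phiInt ε₂ ξ)) + s)) ^ n) ≤
        (⨆ y : Icc (0:ℝ) 1, max (1 / ε₁ y) (1 / ε₂ y)) * x ^ (n + 1) / (n + 1) :=
  characteristic_integral_estimate_case2_general ε₁ ε₂ hε₁ hε₂ hε₁pos hε₂pos ψ₁ ψ₃ hψ₁ hψ₃'
end
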